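/- Let B ⊆ ℝⁿ be a nonempty open connected set, ψ a continuous real-valued function on B, 0 < s < ∞, and F ∈ A^{1,s}(B,ψ). If f : ℝⁿ → ℂ is the continuous function with F(z) = ∫_{ℝⁿ} f(t) e^{2πi t·z} dt for all z ∈ T_B (with t ↦ f(t)e^{−2π y·t} integrable for each y ∈ B), then f(t) = 0 for every t ∉ U_s(B,ψ); that is, the support of f is contained in U_s(B,ψ). -/

import Mathlib

open MeasureTheory Real Filter Set Metric
open scoped ENNReal Topology Pointwise

noncomputable section

/-- Real points of `ℝⁿ` (Euclidean). -/
abbrev RS (n : ℕ) := EuclideanSpace ℝ (Fin n)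
/-- Complex points of `ℂⁿ` (Euclidean). -/
abbrev CS (n : ℕ) := EuclideanSpace ℂ (Fin n)

/-- The point `z = x + i y` of `ℂⁿ`. -/
def tmk {n : ℕ} (x y : RS n) : CS n :=
  (WithLp.equiv 2 (Fin n → ℂ)).symm fun j => (x j : ℂ) + (y j : ℂ) * Complex.I

/-- The tube `T_B = ℝⁿ + iB` over a base `B ⊆ ℝⁿ`. -/
def tube {n : ℕ} (B : Set (RS n)) : Set (CS n) :=
  {z | ((WithLp.equiv 2 (Fin n → ℝ)).symm fun j => (z j).im) ∈ B}

/-- Real dot product `t ⬝ y`. -/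
def rdot {n : ℕ} (t y : RS n) : ℝ := ∑ j, t j * y j

/-- Complex bilinear pairing `t ⬝ z` of a real vector with a complex vector. -/
def cdot {n : ℕ} (t : RS n) (z : CS n) : ℂ := ∑ j, (t j : ℂ) * z j

/-- The `A^{p,s}(B,ψ)`-norm, valued in `ℝ≥0∞`:
`(∫_B (∫_{ℝⁿ} |F(x+iy) e^{−2πψ(y)}|^p dx)^s dy)^{1/(sp)}`. -/
def AnormE {n : ℕ} (F : CS n → ℂ) (B : Set (RS n)) (ψ : RS n → ℝ) (p s : ℝ) : ℝ≥0∞ :=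
  (∫⁻ y in B, (∫⁻ x, ENNReal.ofReal
      ((‖F (tmk x y)‖ * Real.exp (-(2 * Real.pi * ψ y))) ^ p)) ^ s) ^ (1 / (s * p))

/-- Membership in the weighted Bergman space `A^{p,s}(B,ψ)`. -/
def MemA {n : ℕ} (F : CS n → ℂ) (B : Set (RS n)) (ψ : RS n → ℝ) (p s : ℝ) : Prop :=
  DifferentiableOn ℂ F (tube B) ∧ AnormE F B ψ p s < ⊤

/-- The set `U_α(B,ψ) = {t ∈ ℝⁿ : ∫_B e^{−2πα(t·y + ψ(y))} dy < ∞}`. -/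
def Uset {n : ℕ} (B : Set (RS n)) (ψ : RS n → ℝ) (α : ℝ) : Set (RS n) :=
  {t | ∫⁻ y in B, ENNReal.ofReal (Real.exp (-(2 * Real.pi * α * (rdot t y + ψ y)))) < ⊤}

/-!
For `y ∈ B` the slice `x ↦ F (x + i y)` is the inverse Fourier transform of
`t ↦ e^{-2π y·t} f t`. When the slice is integrable, Fourier inversion bounds
`e^{-2π t·y} |f t|` by its `L¹` norm; multiplying by `e^{-2πψ(y)}`, raising to the power `s` and
integrating over `B` gives `|f t|^s ∫_B e^{-2πs(t·y + ψ(y))} dy ≤ ‖F‖^s < ∞`, so `f t = 0`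
whenever the integral diverges, i.e. whenever `t ∉ U_s(B,ψ)`.
-/

open scoped FourierTransform

lemma tmk_mem_tube {n : ℕ} {B : Set (RS n)} (x : RS n) {y : RS n} (hy : y ∈ B) :
    tmk x y ∈ tube B := by
  show (WithLp.equiv 2 (Fin n → ℝ)).symm (fun j => (tmk x y j).im) ∈ B
  convert hy
  ext j
  simp [tmk]

lemma continuous_tmk {n : ℕ} (y : RS n) : Continuous fun x : RS n => tmk x y :=
  (PiLp.continuous_toLp 2 _).comp (continuous_pi fun _ => by fun_prop)

lemma rdot_comm {n : ℕ} (t y : RS n) : rdot t y = rdot y t := by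
  simp only [rdot, mul_comm]

lemma inner_eq_rdot {n : ℕ} (v x : RS n) : inner ℝ v x = rdot v x := by
  simp [PiLp.inner_apply, rdot, mul_comm]

lemma cdot_tmk {n : ℕ} (v x y : RS n) :
    cdot v (tmk x y) = (rdot v x : ℂ) + (rdot v y : ℂ) * Complex.I := by
  simp only [cdot, tmk, rdot, WithLp.equiv_symm_apply, PiLp.toLp_apply]
  push_cast
  rw [Finset.sum_mul, ← Finset.sum_add_distrib]
  exact Finset.sum_congr rfl fun j _ => by ring

lemma Real.norm_le_integral_norm_fourierInv {V E : Type*} [NormedAddCommGroup V]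
    [InnerProductSpace ℝ V] [FiniteDimensional ℝ V] [MeasurableSpace V] [BorelSpace V]
    [NormedAddCommGroup E] [NormedSpace ℂ E] [CompleteSpace E] {g : V → E}
    (hg : Integrable g) (hg' : Integrable (𝓕⁻ g)) {t : V} (ht : ContinuousAt g t) :
    ‖g t‖ ≤ ∫ x, ‖𝓕⁻ g x‖ := by
  have hneg : 𝓕 (fun x => g (-x)) = 𝓕⁻ g := (fourierInv_eq_fourier_comp_neg g).symm
  have hinv : 𝓕⁻ (𝓕 (fun x => g (-x))) (-t) = g t := by
    refine (hg.comp_neg.fourierInv_fourier_eq (hneg ▸ hg') ?_).trans (by rw [neg_neg])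
    exact (neg_neg t ▸ ht).comp continuous_neg.continuousAt
  rw [← hinv, ← hneg]
  exact VectorFourier.norm_fourierIntegral_le_integral_norm _ _ _ _ _

section Slice

variable {n : ℕ} {B : Set (RS n)} {F : CS n → ℂ} {f : RS n → ℂ}

lemma fourierInv_exp_smul_eq_slice
    (hrep : ∀ z ∈ tube B, F z = ∫ t, f t * Complex.exp (2 * (π : ℂ) * Complex.I * cdot t z))
    {y : RS n} (hy : y ∈ B) :
    𝓕⁻ (fun t => Real.exp (-(2 * π * rdot y t)) • f t) = fun x => F (tmk x y) := by
  ext x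
  rw [Real.fourierInv_eq', hrep _ (tmk_mem_tube x hy)]
  refine integral_congr_ae (ae_of_all _ fun v => ?_)
  simp only [inner_eq_rdot, cdot_tmk, rdot_comm y v, smul_eq_mul, Complex.real_smul,
    Complex.ofReal_exp, ← mul_assoc, ← Complex.exp_add]
  rw [mul_comm]
  congr 2
  push_cast
  linear_combination (-2 * (π : ℂ) * (rdot v y : ℂ)) * Complex.I_sq

lemma ofReal_exp_mul_norm_le_lintegral_slice (hf : Continuous f) (hF : ContinuousOn F (tube B))
    (hrep : ∀ z ∈ tube B, F z = ∫ t, f t * Complex.exp (2 * (π : ℂ) * Complex.I * cdot t z))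
    {y : RS n} (hy : y ∈ B) (hint : Integrable (fun t => Real.exp (-(2 * π * rdot y t)) • f t))
    (t : RS n) :
    ENNReal.ofReal (Real.exp (-(2 * π * rdot t y)) * ‖f t‖) ≤ ∫⁻ x, ‖F (tmk x y)‖ₑ := by
  rcases eq_or_ne (∫⁻ x, ‖F (tmk x y)‖ₑ) ⊤ with htop | htop
  · exact htop ▸ le_top
  have hslice : Integrable fun x => F (tmk x y) :=
    ⟨(hF.comp_continuous (continuous_tmk y) fun x => tmk_mem_tube x hy).aestronglyMeasurable,
      htop.lt_top⟩
  have hcont : ContinuousAt (fun t => Real.exp (-(2 * π * rdot y t)) • f t) t := by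
    unfold rdot; fun_prop
  have hbound := Real.norm_le_integral_norm_fourierInv hint
    (fourierInv_exp_smul_eq_slice hrep hy ▸ hslice) hcont
  rw [fourierInv_exp_smul_eq_slice hrep hy, norm_smul, Real.norm_eq_abs, Real.abs_exp,
    rdot_comm y t] at hbound
  rw [← ofReal_integral_norm_eq_lintegral_enorm hslice]
  exact ENNReal.ofReal_le_ofReal hbound

lemma ofReal_mul_exp_le_lintegral_weighted_slice {ψ : RS n → ℝ} (hf : Continuous f)
    (hF : ContinuousOn F (tube B))
    (hrep : ∀ z ∈ tube B, F z = ∫ t, f t * Complex.exp (2 * (π : ℂ) * Complex.I * cdot t z))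
    {y : RS n} (hy : y ∈ B) (hint : Integrable (fun t => Real.exp (-(2 * π * rdot y t)) • f t))
    (t : RS n) :
    ENNReal.ofReal (‖f t‖ * Real.exp (-(2 * π * (rdot t y + ψ y)))) ≤
      ∫⁻ x, ENNReal.ofReal ((‖F (tmk x y)‖ * Real.exp (-(2 * π * ψ y))) ^ (1 : ℝ)) :=
  calc ENNReal.ofReal (‖f t‖ * Real.exp (-(2 * π * (rdot t y + ψ y))))
      = ENNReal.ofReal (Real.exp (-(2 * π * rdot t y)) * ‖f t‖) *
          ENNReal.ofReal (Real.exp (-(2 * π * ψ y))) := by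
        rw [← ENNReal.ofReal_mul (by positivity), mul_add, neg_add, Real.exp_add]
        ring_nf
    _ ≤ (∫⁻ x, ‖F (tmk x y)‖ₑ) * ENNReal.ofReal (Real.exp (-(2 * π * ψ y))) :=
        mul_le_mul_left (ofReal_exp_mul_norm_le_lintegral_slice hf hF hrep hy hint t) _
    _ = _ := by
        rw [← lintegral_mul_const' _ _ ENNReal.ofReal_ne_top]
        simp only [Real.rpow_one, ENNReal.ofReal_mul (norm_nonneg _), ofReal_norm]

end Slice

lemma ENNReal.ofReal_mul_exp_rpow {a : ℝ} (ha : 0 ≤ a) (x : ℝ) {s : ℝ} (hs : 0 ≤ s) :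
    ENNReal.ofReal (a * Real.exp x) ^ s =
      ENNReal.ofReal (Real.exp (s * x)) * ENNReal.ofReal a ^ s := by
  rw [ENNReal.ofReal_rpow_of_nonneg (by positivity) hs, Real.mul_rpow ha (Real.exp_pos x).le,
    ← Real.exp_mul, ENNReal.ofReal_mul (by positivity), ENNReal.ofReal_rpow_of_nonneg ha hs,
    mul_comm, mul_comm x]

theorem statement2_general {n : ℕ} (B : Set (RS n)) (hBo : IsOpen B) (ψ : RS n → ℝ)
    (s : ℝ) (hs : 0 < s) (F : CS n → ℂ) (hF : MemA F B ψ 1 s)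
    (f : RS n → ℂ) (hf : Continuous f)
    (hint : ∀ y ∈ B, Integrable (fun t => Real.exp (-(2 * Real.pi * rdot y t)) • f t))
    (hrep : ∀ z ∈ tube B,
      F z = ∫ t, f t * Complex.exp (2 * (Real.pi : ℂ) * Complex.I * cdot t z)) :
    ∀ t ∉ Uset B ψ s, f t = 0 := by
  intro t ht
  by_contra hft
  have hnorm_finite := (ENNReal.rpow_lt_top_iff_of_pos (by positivity)).mp hF.2
  have hbound : ∀ y ∈ B,
      ENNReal.ofReal (Real.exp (-(2 * π * s * (rdot t y + ψ y)))) * ‖f t‖ₑ ^ s ≤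
        (∫⁻ x, ENNReal.ofReal ((‖F (tmk x y)‖ * Real.exp (-(2 * π * ψ y))) ^ (1 : ℝ))) ^ s := by
    intro y hy
    calc _ = ENNReal.ofReal (‖f t‖ * Real.exp (-(2 * π * (rdot t y + ψ y)))) ^ s := by
          rw [ENNReal.ofReal_mul_exp_rpow (norm_nonneg _) _ hs.le, ofReal_norm]
          ring_nf
      _ ≤ _ := ENNReal.rpow_le_rpow (ofReal_mul_exp_le_lintegral_weighted_slice hf
          hF.1.continuousOn hrep hy (hint y hy) t) hs.le
  have hdiverges : ∫⁻ y in B, ENNReal.ofReal (Real.exp (-(2 * π * s * (rdot t y + ψ y)))) *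
      ‖f t‖ₑ ^ s = ⊤ := by
    have hU : ∫⁻ y in B, ENNReal.ofReal (Real.exp (-(2 * π * s * (rdot t y + ψ y)))) = ⊤ :=
      not_lt_top_iff.mp ht
    rw [lintegral_mul_const' _ _ (by simp [hs.le]), hU]
    exact ENNReal.top_mul (by simpa [hs] using hft)
  exact ((setLIntegral_mono' hBo.measurableSet hbound).trans_lt hnorm_finite).ne hdiverges

/-- Theorem 1 of the paper, support claim for `p = 1`: the density of an
`A^{1,s}(B,ψ)` function is supported in `U_s(B,ψ)`. -/
theorem statement2 {n : ℕ} (B : Set (RS n)) (hBne : B.Nonempty) (hBo : IsOpen B)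
    (hBc : IsConnected B) (ψ : RS n → ℝ) (hψ : ContinuousOn ψ B)
    (s : ℝ) (hs : 0 < s) (F : CS n → ℂ) (hF : MemA F B ψ 1 s)
    (f : RS n → ℂ) (hf : Continuous f)
    (hint : ∀ y ∈ B, Integrable (fun t => Real.exp (-(2 * Real.pi * rdot y t)) • f t))
    (hrep : ∀ z ∈ tube B,
      F z = ∫ t, f t * Complex.exp (2 * (Real.pi : ℂ) * Complex.I * cdot t z)) :
    ∀ t ∉ Uset B ψ s, f t = 0 :=
  statement2_general B hBo ψ s hs F hF f hf hint hrep
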